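/- arXiv:1903.09367 — 3 statements merged into one kernel-verified Lean document; each statement's English description precedes it below -/
import Mathlib

section
/- Let X ∈ ℝ^{n×p} satisfy the (s+1, δ)-Restricted Isometry Property. Then for every s-sparse vector u ∈ ℝ^p and every vector v ∈ ℝ^p, ‖(n⁻¹XᵀX u) ∘ v − u ∘ v‖_∞ ≤ δ·‖u‖·‖v‖_∞. -/
open MeasureTheory ProbabilityTheory Matrix Filter Topology

noncomputable section

/-- Hadamard (entrywise) product of two vectors. -/
def had {p : ℕ} (u v : Fin p → ℝ) : Fin p → ℝ := fun j => u j * v j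

/-- Euclidean norm of a vector. -/
def nrm2 {p : ℕ} (v : Fin p → ℝ) : ℝ := Real.sqrt (∑ j, (v j) ^ 2)

/-- ℓ1 norm of a vector. -/
def nrm1 {p : ℕ} (v : Fin p → ℝ) : ℝ := ∑ j, |v j|

/-- Sup norm of a vector. -/
def nrmInf {p : ℕ} (v : Fin p → ℝ) : ℝ := ⨆ j, |v j|

/-- A vector is `s`-sparse if it has at most `s` nonzero entries. -/
def Sparse {p : ℕ} (s : ℕ) (v : Fin p → ℝ) : Prop := {j | v j ≠ 0}.ncard ≤ s

/-- The `(s, δ)`-Restricted Isometry Property: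
`(1−δ)‖u‖² ≤ n⁻¹‖Xu‖² ≤ (1+δ)‖u‖²` for all `s`-sparse `u`. -/
def RIP {n p : ℕ} (X : Matrix (Fin n) (Fin p) ℝ) (s : ℕ) (δ : ℝ) : Prop :=
  ∀ u : Fin p → ℝ, Sparse s u →
    (1 - δ) * nrm2 u ^ 2 ≤ (n : ℝ)⁻¹ * nrm2 (X.mulVec u) ^ 2 ∧
      (n : ℝ)⁻¹ * nrm2 (X.mulVec u) ^ 2 ≤ (1 + δ) * nrm2 u ^ 2

lemma nrm2_sq {p : ℕ} (w : Fin p → ℝ) : nrm2 w ^ 2 = ∑ j, (w j) ^ 2 := by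
  rw [nrm2, Real.sq_sqrt]; positivity

lemma nrm2_nonneg {p : ℕ} (w : Fin p → ℝ) : 0 ≤ nrm2 w := Real.sqrt_nonneg _

/-- Under the `(s+1, δ)`-RIP, for every `s`-sparse `u` and every `v`,
`‖(n⁻¹XᵀXu)∘v − u∘v‖_∞ ≤ δ‖u‖‖v‖_∞`. -/
theorem stmt10 (n p s : ℕ) (X : Matrix (Fin n) (Fin p) ℝ) (δ : ℝ)
    (hRIP : RIP X (s + 1) δ) (u v : Fin p → ℝ) (hu : Sparse s u) :
    nrmInf (had ((n : ℝ)⁻¹ • Xᵀ.mulVec (X.mulVec u)) v - had u v) ≤ δ * nrm2 u * nrmInf v := by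
  by_cases hu0 : u = 0
  · subst hu0
    have h0 : nrm2 (0 : Fin p → ℝ) = 0 := by simp [nrm2]
    have h1 : (had ((n : ℝ)⁻¹ • Xᵀ.mulVec (X.mulVec (0 : Fin p → ℝ))) v - had 0 v) = 0 := by
      funext j
      simp [had, Matrix.mulVec_zero]
    rw [h1, h0]
    have : nrmInf (0 : Fin p → ℝ) = 0 := by
      simp [nrmInf]
    rw [this]
    ring_nf
    simp
  · obtain ⟨j₀, hj₀⟩ : ∃ j, u j ≠ 0 := by
      by_contra h; push_neg at h; exact hu0 (funext h)
    haveI : Nonempty (Fin p) := ⟨j₀⟩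
    set t := nrm2 u with ht
    have htsq : t ^ 2 = ∑ k, (u k) ^ 2 := nrm2_sq u
    have htpos : 0 < t := by
      have : 0 < t ^ 2 := by
        rw [htsq]
        exact Finset.sum_pos' (fun i _ => sq_nonneg _) ⟨j₀, Finset.mem_univ _, by positivity⟩
      nlinarith [nrm2_nonneg u]
    -- δ ≥ 0
    have hδ : 0 ≤ δ := by
      set e : Fin p → ℝ := fun k => if k = j₀ then 1 else 0 with he
      have hsp : Sparse (s + 1) e := by
        unfold Sparse
        calc {k | e k ≠ 0}.ncard ≤ ({j₀} : Set (Fin p)).ncard := by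
              apply Set.ncard_le_ncard _ (Set.toFinite _)
              intro k hk
              simp only [he, Set.mem_setOf_eq, ne_eq, ite_eq_right_iff, not_forall] at hk
              exact hk.1
          _ ≤ s + 1 := by rw [Set.ncard_singleton]; omega
      obtain ⟨hL, hR⟩ := hRIP e hsp
      have hse : nrm2 e ^ 2 = 1 := by
        rw [nrm2_sq]
        simp [he, Finset.sum_ite_eq']
      rw [hse] at hL hR
      linarith
    -- key coordinatewise bound
    have key : ∀ j : Fin p, |(n : ℝ)⁻¹ * Xᵀ.mulVec (X.mulVec u) j - u j| ≤ δ * t := by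
      intro j
      set b : Fin p → ℝ := fun k => if k = j then t else 0 with hb
      have hsp : ∀ c : ℝ, Sparse (s + 1) (fun k => u k + c * b k) := by
        intro c
        unfold Sparse
        calc {k | u k + c * b k ≠ 0}.ncard ≤ ({k | u k ≠ 0} ∪ {j}).ncard := by
              apply Set.ncard_le_ncard _ (Set.toFinite _)
              intro k hk
              simp only [Set.mem_setOf_eq] at hk
              by_contra hc
              simp only [Set.mem_union, Set.mem_setOf_eq, Set.mem_singleton_iff, not_or,
                not_not] at hc
              apply hk
              simp [hb, hc.1, hc.2]
          _ ≤ {k | u k ≠ 0}.ncard + ({j} : Set (Fin p)).ncard :=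
              Set.ncard_union_le _ _
          _ ≤ s + 1 := by rw [Set.ncard_singleton]; exact Nat.add_le_add hu le_rfl
      -- sums of squares of u + c b
      have hS : ∀ c : ℝ, nrm2 (fun k => u k + c * b k) ^ 2 = t ^ 2 + 2 * c * t * u j + c ^ 2 * t ^ 2 := by
        intro c
        rw [nrm2_sq]
        have : ∀ k, (u k + c * b k) ^ 2 = u k ^ 2 + 2 * c * (u k * b k) + c ^ 2 * b k ^ 2 := by
          intro k; ring
        rw [Finset.sum_congr rfl (fun k _ => this k)]
        rw [Finset.sum_add_distrib, Finset.sum_add_distrib, ← Finset.mul_sum, ← Finset.mul_sum]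
        have h1 : ∑ k, u k * b k = u j * t := by
          simp [hb, Finset.sum_ite_eq', mul_comm]
        have h2 : ∑ k, b k ^ 2 = t ^ 2 := by
          have : ∀ k, b k ^ 2 = if k = j then t ^ 2 else 0 := by
            intro k; by_cases h : k = j <;> simp [hb, h]
          rw [Finset.sum_congr rfl (fun k _ => this k)]
          simp [Finset.sum_ite_eq']
        rw [h1, h2, ← htsq]
        ring
      -- mulVec linearity
      have hlin : ∀ (c : ℝ) (i : Fin n),
          X.mulVec (fun k => u k + c * b k) i = X.mulVec u i + c * X.mulVec b i := by
        intro c i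
        simp only [Matrix.mulVec, dotProduct]
        rw [Finset.mul_sum]
        rw [← Finset.sum_add_distrib]
        apply Finset.sum_congr rfl
        intro k _
        ring
      -- D c := sum of squares of X (u + c b)
      have hD : ∀ c : ℝ, nrm2 (X.mulVec (fun k => u k + c * b k)) ^ 2 =
          (∑ i, X.mulVec u i ^ 2) + 2 * c * (∑ i, X.mulVec u i * X.mulVec b i)
            + c ^ 2 * (∑ i, X.mulVec b i ^ 2) := by
        intro c
        rw [nrm2_sq]
        have : ∀ i, X.mulVec (fun k => u k + c * b k) i ^ 2 =
            X.mulVec u i ^ 2 + 2 * c * (X.mulVec u i * X.mulVec b i) + c ^ 2 * X.mulVec b i ^ 2 := by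
          intro i; rw [hlin c i]; ring
        rw [Finset.sum_congr rfl (fun i _ => this i)]
        rw [Finset.sum_add_distrib, Finset.sum_add_distrib, ← Finset.mul_sum, ← Finset.mul_sum]
      -- cross term is t * (XᵀXu) j
      have hcross : (∑ i, X.mulVec u i * X.mulVec b i) = t * Xᵀ.mulVec (X.mulVec u) j := by
        have hXb : ∀ i, X.mulVec b i = t * X i j := by
          intro i
          simp [Matrix.mulVec, dotProduct, hb, Finset.sum_ite_eq', mul_comm]
        rw [Finset.sum_congr rfl (fun i _ => by rw [hXb i])]
        simp only [Matrix.mulVec, dotProduct, Matrix.transpose_apply]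
        rw [Finset.mul_sum]
        apply Finset.sum_congr rfl
        intro i _
        ring
      obtain ⟨hL1, hR1⟩ := hRIP (fun k => u k + 1 * b k) (hsp 1)
      obtain ⟨hL2, hR2⟩ := hRIP (fun k => u k + (-1) * b k) (hsp (-1))
      rw [hS 1, hD 1] at hL1 hR1
      rw [hS (-1), hD (-1)] at hL2 hR2
      rw [hcross] at hR1 hL1 hR2 hL2
      set w := Xᵀ.mulVec (X.mulVec u) j with hw
      rw [abs_le]
      constructor
      · -- lower bound: from (1-δ) S1 ≤ n⁻¹ D1 and n⁻¹ D(-1) ≤ (1+δ) S(-1)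
        nlinarith [htpos, sub_nonneg.2 hL1, sub_nonneg.2 hR2,
          mul_pos htpos htpos]
      · nlinarith [htpos, sub_nonneg.2 hR1, sub_nonneg.2 hL2,
          mul_pos htpos htpos]
    -- conclude
    rw [nrmInf]
    apply ciSup_le
    intro j
    have h1 : |(had ((n : ℝ)⁻¹ • Xᵀ.mulVec (X.mulVec u)) v - had u v) j| =
        |(n : ℝ)⁻¹ * Xᵀ.mulVec (X.mulVec u) j - u j| * |v j| := by
      simp only [had, Pi.sub_apply, Pi.smul_apply, smul_eq_mul]
      rw [← sub_mul, abs_mul]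
    rw [h1]
    have h2 : |v j| ≤ nrmInf v := by
      rw [nrmInf]
      exact le_ciSup (Set.Finite.bddAbove (Set.finite_range fun j => |v j|)) j
    calc |(n : ℝ)⁻¹ * Xᵀ.mulVec (X.mulVec u) j - u j| * |v j|
        ≤ (δ * t) * nrmInf v := by
          apply mul_le_mul (key j) h2 (abs_nonneg _) (by positivity)
      _ = δ * nrm2 u * nrmInf v := by rw [ht]
end
end

section
/- Let X ∈ ℝ^{n×p} satisfy the (2s, δ)-Restricted Isometry Property. Then for any two s-sparse vectors u, v ∈ ℝ^p, the Euclidean inner product is approximately preserved: |n⁻¹⟨Xu, Xv⟩ − ⟨u, v⟩| ≤ δ·‖u‖·‖v‖. -/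
open MeasureTheory ProbabilityTheory Matrix Filter Topology

noncomputable section

section AuxStmt12

lemma sparse_of_subset' {p : ℕ} {s : ℕ} {w z : Fin p → ℝ}
    (h : {j | w j ≠ 0} ⊆ {j | z j ≠ 0}) (hz : Sparse s z) : Sparse s w :=
  le_trans (Set.ncard_le_ncard h (Set.toFinite _)) hz

lemma sparse_smul' {p s : ℕ} {w : Fin p → ℝ} (c : ℝ) (hw : Sparse s w) :
    Sparse s (c • w) := by
  refine sparse_of_subset' ?_ hw
  intro j hj
  simp only [Set.mem_setOf_eq, Pi.smul_apply, smul_eq_mul] at hj ⊢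
  exact fun h => hj (by rw [h, mul_zero])

lemma sparse_add' {p s : ℕ} {w z : Fin p → ℝ} (hw : Sparse s w) (hz : Sparse s z) :
    Sparse (2 * s) (w + z) := by
  have hsub : {j | (w + z) j ≠ 0} ⊆ {j | w j ≠ 0} ∪ {j | z j ≠ 0} := by
    intro j hj
    by_contra h
    simp only [Set.mem_union, Set.mem_setOf_eq, not_or, not_not] at h
    exact hj (by simp [h.1, h.2])
  calc {j | (w + z) j ≠ 0}.ncard ≤ ({j | w j ≠ 0} ∪ {j | z j ≠ 0}).ncard :=
        Set.ncard_le_ncard hsub (Set.toFinite _)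
    _ ≤ {j | w j ≠ 0}.ncard + {j | z j ≠ 0}.ncard := Set.ncard_union_le _ _
    _ ≤ s + s := add_le_add hw hz
    _ = 2 * s := (two_mul s).symm

lemma sparse_sub' {p s : ℕ} {w z : Fin p → ℝ} (hw : Sparse s w) (hz : Sparse s z) :
    Sparse (2 * s) (w - z) := by
  have := sparse_add' hw (sparse_smul' (-1 : ℝ) hz)
  simpa [sub_eq_add_neg] using this

end AuxStmt12

/-- Under the `(2s, δ)`-RIP, the Euclidean inner product of `s`-sparse vectors is
approximately preserved: `|n⁻¹⟨Xu, Xv⟩ − ⟨u, v⟩| ≤ δ‖u‖‖v‖`. -/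
theorem stmt12 (n p s : ℕ) (X : Matrix (Fin n) (Fin p) ℝ) (δ : ℝ)
    (hRIP : RIP X (2 * s) δ) (u v : Fin p → ℝ) (hu : Sparse s u) (hv : Sparse s v) :
    |(n : ℝ)⁻¹ * (∑ i, X.mulVec u i * X.mulVec v i) - ∑ j, u j * v j| ≤ δ * nrm2 u * nrm2 v := by
  classical
  have hsq : ∀ {m : ℕ} (w : Fin m → ℝ), nrm2 w ^ 2 = ∑ j, (w j) ^ 2 := by
    intro m w
    exact Real.sq_sqrt (Finset.sum_nonneg fun j _ => sq_nonneg _)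
  set Q : (Fin p → ℝ) → ℝ :=
    fun w => (n : ℝ)⁻¹ * ∑ i, (X.mulVec w i) ^ 2 - ∑ j, (w j) ^ 2 with hQdef
  have hQ : ∀ w, Sparse (2 * s) w → |Q w| ≤ δ * ∑ j, (w j) ^ 2 := by
    intro w hw
    obtain ⟨h1, h2⟩ := hRIP w hw
    rw [hsq, hsq] at h1 h2
    rw [abs_le]
    constructor <;> simp only [hQdef] <;>
      nlinarith [Finset.sum_nonneg (fun j (_ : j ∈ Finset.univ) => sq_nonneg (w j))]
  have expand : ∀ {m : ℕ} (f g : Fin m → ℝ),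
      ∑ i, (f i + g i) ^ 2 = (∑ i, (f i) ^ 2) + 2 * (∑ i, f i * g i) + ∑ i, (g i) ^ 2 := by
    intro m f g
    rw [Finset.mul_sum, ← Finset.sum_add_distrib, ← Finset.sum_add_distrib]
    exact Finset.sum_congr rfl fun i _ => by ring
  have expand' : ∀ {m : ℕ} (f g : Fin m → ℝ),
      ∑ i, (f i - g i) ^ 2 = (∑ i, (f i) ^ 2) - 2 * (∑ i, f i * g i) + ∑ i, (g i) ^ 2 := by
    intro m f g
    rw [Finset.mul_sum, ← Finset.sum_sub_distrib, ← Finset.sum_add_distrib]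
    exact Finset.sum_congr rfl fun i _ => by ring
  have hpol : ∀ w z : Fin p → ℝ,
      (n : ℝ)⁻¹ * (∑ i, X.mulVec w i * X.mulVec z i) - ∑ j, w j * z j
        = (Q (w + z) - Q (w - z)) / 4 := by
    intro w z
    simp only [hQdef, Matrix.mulVec_add, Matrix.mulVec_sub, Pi.add_apply, Pi.sub_apply,
      expand, expand']
    ring
  have hscale : ∀ (c d : ℝ) (w z : Fin p → ℝ),
      (n : ℝ)⁻¹ * (∑ i, X.mulVec (c • w) i * X.mulVec (d • z) i) - ∑ j, (c • w) j * (d • z) j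
        = c * d * ((n : ℝ)⁻¹ * (∑ i, X.mulVec w i * X.mulVec z i) - ∑ j, w j * z j) := by
    intro c d w z
    have e1 : ∑ i, X.mulVec (c • w) i * X.mulVec (d • z) i
        = c * d * ∑ i, X.mulVec w i * X.mulVec z i := by
      rw [Finset.mul_sum]
      refine Finset.sum_congr rfl fun i _ => ?_
      simp only [Matrix.mulVec_smul, Pi.smul_apply, smul_eq_mul]
      ring
    have e2 : ∑ j, (c • w) j * (d • z) j = c * d * ∑ j, w j * z j := by
      rw [Finset.mul_sum]
      refine Finset.sum_congr rfl fun j _ => ?_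
      simp only [Pi.smul_apply, smul_eq_mul]
      ring
    rw [e1, e2]
    ring
  by_cases hu0 : ∑ j, (u j) ^ 2 = 0
  · have hz : ∀ j, u j = 0 := by
      intro j
      have := (Finset.sum_eq_zero_iff_of_nonneg (fun j _ => sq_nonneg (u j))).1 hu0 j
        (Finset.mem_univ j)
      exact pow_eq_zero_iff (by norm_num) |>.1 this
    have hXu : ∀ i, X.mulVec u i = 0 := by
      intro i
      simp [Matrix.mulVec, dotProduct, hz]
    have hnu : nrm2 u = 0 := by simp [nrm2, hz]
    simp [hXu, hz, hnu]
  by_cases hv0 : ∑ j, (v j) ^ 2 = 0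
  · have hz : ∀ j, v j = 0 := by
      intro j
      have := (Finset.sum_eq_zero_iff_of_nonneg (fun j _ => sq_nonneg (v j))).1 hv0 j
        (Finset.mem_univ j)
      exact pow_eq_zero_iff (by norm_num) |>.1 this
    have hXv : ∀ i, X.mulVec v i = 0 := by
      intro i
      simp [Matrix.mulVec, dotProduct, hz]
    have hnv : nrm2 v = 0 := by simp [nrm2, hz]
    simp [hXv, hz, hnv]
  set a := nrm2 u with ha
  set b := nrm2 v with hb
  have hsu : (0:ℝ) < ∑ j, (u j) ^ 2 :=
    lt_of_le_of_ne (Finset.sum_nonneg fun j _ => sq_nonneg _) (Ne.symm hu0)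
  have hsv : (0:ℝ) < ∑ j, (v j) ^ 2 :=
    lt_of_le_of_ne (Finset.sum_nonneg fun j _ => sq_nonneg _) (Ne.symm hv0)
  have hapos : 0 < a := Real.sqrt_pos.2 hsu
  have hbpos : 0 < b := Real.sqrt_pos.2 hsv
  set u' : Fin p → ℝ := a⁻¹ • u with hu'
  set v' : Fin p → ℝ := b⁻¹ • v with hv'
  have hueq : u = a • u' := by
    rw [hu', smul_smul, mul_inv_cancel₀ hapos.ne', one_smul]
  have hveq : v = b • v' := by
    rw [hv', smul_smul, mul_inv_cancel₀ hbpos.ne', one_smul]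
  have hsu' : ∑ j, (u' j) ^ 2 = 1 := by
    simp only [hu', Pi.smul_apply, smul_eq_mul, mul_pow]
    rw [← Finset.mul_sum]
    have h2 : a ^ 2 = ∑ j, (u j) ^ 2 := hsq u
    rw [← h2]
    field_simp
  have hsv' : ∑ j, (v' j) ^ 2 = 1 := by
    simp only [hv', Pi.smul_apply, smul_eq_mul, mul_pow]
    rw [← Finset.mul_sum]
    have h2 : b ^ 2 = ∑ j, (v j) ^ 2 := hsq v
    rw [← h2]
    field_simp
  have hu's : Sparse s u' := sparse_smul' _ hu
  have hv's : Sparse s v' := sparse_smul' _ hv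
  have key : |(n : ℝ)⁻¹ * (∑ i, X.mulVec u' i * X.mulVec v' i) - ∑ j, u' j * v' j| ≤ δ := by
    rw [hpol]
    have h1 := hQ (u' + v') (sparse_add' hu's hv's)
    have h2 := hQ (u' - v') (sparse_sub' hu's hv's)
    have e1 : ∑ j, ((u' + v') j) ^ 2 = 2 + 2 * ∑ j, u' j * v' j := by
      simp only [Pi.add_apply]; rw [expand, hsu', hsv']; ring
    have e2 : ∑ j, ((u' - v') j) ^ 2 = 2 - 2 * ∑ j, u' j * v' j := by
      simp only [Pi.sub_apply]; rw [expand', hsu', hsv']; ring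
    rw [e1] at h1
    rw [e2] at h2
    have habs : |Q (u' + v') - Q (u' - v')| ≤ 4 * δ := by
      have htri : |Q (u' + v') - Q (u' - v')| ≤ |Q (u' + v')| + |Q (u' - v')| := by
        have := abs_add_le (Q (u' + v')) (-(Q (u' - v')))
        simpa [sub_eq_add_neg, abs_neg] using this
      calc |Q (u' + v') - Q (u' - v')| ≤ |Q (u' + v')| + |Q (u' - v')| := htri
        _ ≤ δ * (2 + 2 * ∑ j, u' j * v' j) + δ * (2 - 2 * ∑ j, u' j * v' j) :=
            add_le_add h1 h2
        _ = 4 * δ := by ring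
    calc |(Q (u' + v') - Q (u' - v')) / 4| = |Q (u' + v') - Q (u' - v')| / 4 := by
          rw [abs_div]; norm_num
      _ ≤ 4 * δ / 4 := by linarith
      _ = δ := by ring
  calc |(n : ℝ)⁻¹ * (∑ i, X.mulVec u i * X.mulVec v i) - ∑ j, u j * v j|
      = |a * b * ((n : ℝ)⁻¹ * (∑ i, X.mulVec u' i * X.mulVec v' i) - ∑ j, u' j * v' j)| := by
        conv_lhs => rw [hueq, hveq]
        rw [hscale]
    _ = a * b * |(n : ℝ)⁻¹ * (∑ i, X.mulVec u' i * X.mulVec v' i) - ∑ j, u' j * v' j| := by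
        rw [abs_mul, abs_of_pos (mul_pos hapos hbpos)]
    _ ≤ a * b * δ := mul_le_mul_of_nonneg_left key (mul_pos hapos hbpos).le
    _ = δ * a * b := by ring
end
end

section
/- Let w ∈ ℝⁿ be a random vector with i.i.d. N(0, σ²) entries and let X ∈ ℝ^{n×s} have all columns of Euclidean norm exactly √n, with s < n. Then for any M ≥ 1, with probability at least 1 − e^{−Ms}, (1/n)·‖Xᵀw‖ ≤ 3σ·√(Ms·λ_max(XᵀX/n)/n), where λ_max denotes the largest eigenvalue. -/
open MeasureTheory ProbabilityTheory Matrix Filter Topology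

noncomputable section

/-- Law of a random vector in ℝⁿ with i.i.d. `N(0, σ²)` entries. -/
def noiseMeasure (n : ℕ) (σ : ℝ) : Measure (Fin n → ℝ) :=
  Measure.pi fun _ => gaussianReal 0 (σ ^ 2).toNNReal

/-- Largest eigenvalue of a symmetric matrix, as the supremum of its quadratic form
over Euclidean unit vectors. -/
def lamMax {s : ℕ} (A : Matrix (Fin s) (Fin s) ℝ) : ℝ :=
  sSup {r : ℝ | ∃ v : Fin s → ℝ, nrm2 v = 1 ∧ r = ∑ i, v i * A.mulVec v i}

/-!
Write `w = σ z` with `z` a standard Gaussian vector and let `λ = λ_max(XᵀX/n)`, so that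
`‖X g‖² ≤ n λ ‖g‖²`. Linearizing the square with an independent standard Gaussian `g ∈ ℝˢ`,
`exp (t ‖Xᵀ z‖²) = E_g exp (√(2t) ⟨Xᵀ z, g⟩)`, and integrating out `z` first gives
`E exp (t ‖Xᵀ z‖²) = E_g exp (t ‖X g‖²) ≤ E_g exp (t n λ ‖g‖²) = √2 ^ s` for `t = 1 / (4 n λ)`.
Markov's inequality at level `‖Xᵀ z‖² ≥ 9 M s n λ` then bounds the failure probability by
`√2 ^ s e^{-9Ms/4} ≤ e^{-Ms}`. The column normalization gives `λ ≥ 1`, so `t` is well defined.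
-/

open Real
open scoped ENNReal NNReal

lemma lintegral_fintype_prod_eq_prod {ι : Type*} [Fintype ι] {Ω : ι → Type*}
    [∀ i, MeasurableSpace (Ω i)] (μ : ∀ i, Measure (Ω i)) [∀ i, IsProbabilityMeasure (μ i)]
    {f : ∀ i, Ω i → ℝ≥0∞}
    (hf : ∀ i, Measurable (f i)) :
    ∫⁻ x, ∏ i, f i (x i) ∂Measure.pi μ = ∏ i, ∫⁻ y, f i y ∂μ i := by
  rw [lintegral_prod_eq_prod_lintegral_of_indepFun _ _
    (iIndepFun_pi fun i => (hf i).aemeasurable) fun i => (hf i).comp (measurable_pi_apply i)]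
  exact Finset.prod_congr rfl fun i _ => (measurePreserving_eval μ i).lintegral_comp (hf i)

lemma lintegral_exp_mul_gaussianReal (m : ℝ) (v : ℝ≥0) (b : ℝ) :
    ∫⁻ x, ENNReal.ofReal (exp (b * x)) ∂gaussianReal m v =
      ENNReal.ofReal (exp (m * b + v * b ^ 2 / 2)) := by
  rw [← ofReal_integral_eq_lintegral_ofReal (integrable_exp_mul_gaussianReal b)
    (ae_of_all _ fun x => (exp_pos _).le)]
  exact congrArg ENNReal.ofReal (congrFun mgf_id_gaussianReal b)

lemma lintegral_exp_mul_sq_gaussianReal {a : ℝ} (ha : a < 1 / 2) :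
    ∫⁻ x, ENNReal.ofReal (exp (a * x ^ 2)) ∂gaussianReal 0 1 =
      ENNReal.ofReal (√(1 - 2 * a))⁻¹ := by
  have hb : 0 < 1 / 2 - a := by linarith
  have hdensity : ∀ x, gaussianPDF 0 1 x * ENNReal.ofReal (exp (a * x ^ 2)) =
      ENNReal.ofReal ((√(2 * π))⁻¹ * exp (-(1 / 2 - a) * x ^ 2)) := by
    intro x
    rw [gaussianPDF, gaussianPDFReal, ← ENNReal.ofReal_mul (by positivity), mul_assoc,
      ← exp_add]
    simp only [NNReal.coe_one, mul_one, sub_zero]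
    ring_nf
  rw [gaussianReal_of_var_ne_zero 0 one_ne_zero,
    lintegral_withDensity_eq_lintegral_mul _ (measurable_gaussianPDF 0 1) (by fun_prop)]
  simp only [Pi.mul_apply, hdensity]
  rw [← ofReal_integral_eq_lintegral_ofReal ((integrable_exp_neg_mul_sq hb).const_mul _)
    (ae_of_all _ fun x => by positivity), integral_const_mul, integral_gaussian]
  congr 1
  rw [← sqrt_inv, ← sqrt_mul (by positivity), ← sqrt_inv]
  congr 1
  field_simp

lemma ofReal_exp_sum {ι : Type*} (s : Finset ι) (f : ι → ℝ) :
    ENNReal.ofReal (exp (∑ i ∈ s, f i)) = ∏ i ∈ s, ENNReal.ofReal (exp (f i)) := by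
  rw [exp_sum, ENNReal.ofReal_prod_of_nonneg fun i _ => (exp_pos _).le]

abbrev stdGaussianPi (ι : Type*) [Fintype ι] : Measure (ι → ℝ) :=
  Measure.pi fun _ : ι => gaussianReal 0 1

section StdGaussianPi

variable {ι κ : Type*} [Fintype ι] [Fintype κ]

lemma lintegral_exp_dotProduct_stdGaussianPi (b : ι → ℝ) :
    ∫⁻ x, ENNReal.ofReal (exp (b ⬝ᵥ x)) ∂stdGaussianPi ι =
      ENNReal.ofReal (exp (b ⬝ᵥ b / 2)) := by
  simp only [dotProduct, Finset.sum_div, ofReal_exp_sum]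
  rw [lintegral_fintype_prod_eq_prod _ (f := fun i y => ENNReal.ofReal (exp (b i * y)))
    fun i => by fun_prop]
  simp [lintegral_exp_mul_gaussianReal, sq]

lemma lintegral_exp_mul_dotProduct_self_stdGaussianPi {a : ℝ} (ha : a < 1 / 2) :
    ∫⁻ x, ENNReal.ofReal (exp (a * (x ⬝ᵥ x))) ∂stdGaussianPi ι =
      ENNReal.ofReal (√(1 - 2 * a))⁻¹ ^ Fintype.card ι := by
  simp only [dotProduct, Finset.mul_sum, ofReal_exp_sum]
  rw [lintegral_fintype_prod_eq_prod _ (f := fun _ y => ENNReal.ofReal (exp (a * (y * y))))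
    fun i => by fun_prop]
  simp [← sq, lintegral_exp_mul_sq_gaussianReal ha]

lemma lintegral_exp_mul_dotProduct_mulVec_le (A : Matrix κ ι ℝ) {L t : ℝ}
    (hA : ∀ g, (Aᵀ *ᵥ g) ⬝ᵥ (Aᵀ *ᵥ g) ≤ L * (g ⬝ᵥ g)) (ht : 0 ≤ t) (htL : t * L < 1 / 2) :
    ∫⁻ z, ENNReal.ofReal (exp (t * ((A *ᵥ z) ⬝ᵥ (A *ᵥ z)))) ∂stdGaussianPi ι ≤
      ENNReal.ofReal (√(1 - 2 * (t * L)))⁻¹ ^ Fintype.card κ := by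
  set c := √(2 * t)
  have hc : c * c = 2 * t := mul_self_sqrt (by positivity)
  have hlin : ∀ z : ι → ℝ, ENNReal.ofReal (exp (t * ((A *ᵥ z) ⬝ᵥ (A *ᵥ z)))) =
      ∫⁻ g, ENNReal.ofReal (exp ((c • A *ᵥ z) ⬝ᵥ g)) ∂stdGaussianPi κ := by
    intro z
    rw [lintegral_exp_dotProduct_stdGaussianPi, smul_dotProduct, dotProduct_smul, smul_smul,
      smul_eq_mul, hc]
    ring_nf
  have hswap : ∀ g : κ → ℝ, ∫⁻ z, ENNReal.ofReal (exp ((c • A *ᵥ z) ⬝ᵥ g)) ∂stdGaussianPi ι =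
      ENNReal.ofReal (exp (t * ((Aᵀ *ᵥ g) ⬝ᵥ (Aᵀ *ᵥ g)))) := by
    intro g
    have hdual : ∀ z, (c • A *ᵥ z) ⬝ᵥ g = (c • Aᵀ *ᵥ g) ⬝ᵥ z := fun z => by
      rw [smul_dotProduct, smul_dotProduct, dotProduct_comm, ← dotProduct_transpose_mulVec,
        dotProduct_comm]
    simp_rw [hdual]
    rw [lintegral_exp_dotProduct_stdGaussianPi, smul_dotProduct, dotProduct_smul, smul_smul,
      smul_eq_mul, hc]
    ring_nf
  calc ∫⁻ z, ENNReal.ofReal (exp (t * ((A *ᵥ z) ⬝ᵥ (A *ᵥ z)))) ∂stdGaussianPi ι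
      = ∫⁻ z, ∫⁻ g, ENNReal.ofReal (exp ((c • A *ᵥ z) ⬝ᵥ g)) ∂stdGaussianPi κ
          ∂stdGaussianPi ι := lintegral_congr hlin
    _ = ∫⁻ g, ∫⁻ z, ENNReal.ofReal (exp ((c • A *ᵥ z) ⬝ᵥ g)) ∂stdGaussianPi ι
          ∂stdGaussianPi κ := lintegral_lintegral_swap (by fun_prop)
    _ = ∫⁻ g, ENNReal.ofReal (exp (t * ((Aᵀ *ᵥ g) ⬝ᵥ (Aᵀ *ᵥ g)))) ∂stdGaussianPi κ :=
          lintegral_congr hswap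
    _ ≤ ∫⁻ g, ENNReal.ofReal (exp (t * L * (g ⬝ᵥ g))) ∂stdGaussianPi κ := by
          refine lintegral_mono fun g => ENNReal.ofReal_le_ofReal (exp_le_exp.2 ?_)
          rw [mul_assoc]
          exact mul_le_mul_of_nonneg_left (hA g) ht
    _ = ENNReal.ofReal (√(1 - 2 * (t * L)))⁻¹ ^ Fintype.card κ :=
          lintegral_exp_mul_dotProduct_self_stdGaussianPi htL

lemma stdGaussianPi_dotProduct_mulVec_tail_le (A : Matrix κ ι ℝ) {L : ℝ} (hL : 0 < L)
    (hA : ∀ g, (Aᵀ *ᵥ g) ⬝ᵥ (Aᵀ *ᵥ g) ≤ L * (g ⬝ᵥ g)) (a : ℝ) :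
    stdGaussianPi ι {z | a ≤ (A *ᵥ z) ⬝ᵥ (A *ᵥ z)} ≤
      ENNReal.ofReal (√2 ^ Fintype.card κ * exp (-(a / (4 * L)))) := by
  set t := (4 * L)⁻¹
  have htL : t * L = 1 / 4 := by simp only [t]; field_simp
  have hmgf := lintegral_exp_mul_dotProduct_mulVec_le A hA (t := t) (by positivity)
    (by rw [htL]; norm_num)
  have hsqrt : (√(1 - 2 * (t * L)))⁻¹ = √2 := by
    rw [htL, ← sqrt_inv]; norm_num
  rw [hsqrt, ← ENNReal.ofReal_pow (sqrt_nonneg 2)] at hmgf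
  have hmarkov := meas_ge_le_lintegral_div
    (f := fun z => ENNReal.ofReal (exp (t * ((A *ᵥ z) ⬝ᵥ (A *ᵥ z)))))
    (μ := stdGaussianPi ι) (by fun_prop) (ε := ENNReal.ofReal (exp (t * a)))
    (by simp [exp_pos]) ENNReal.ofReal_ne_top
  calc stdGaussianPi ι {z | a ≤ (A *ᵥ z) ⬝ᵥ (A *ᵥ z)}
      ≤ stdGaussianPi ι {z | ENNReal.ofReal (exp (t * a)) ≤
          ENNReal.ofReal (exp (t * ((A *ᵥ z) ⬝ᵥ (A *ᵥ z))))} :=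
        measure_mono fun z hz => ENNReal.ofReal_le_ofReal <| exp_le_exp.2 <|
          mul_le_mul_of_nonneg_left hz (by positivity)
    _ ≤ ENNReal.ofReal (√2 ^ Fintype.card κ) / ENNReal.ofReal (exp (t * a)) :=
        hmarkov.trans (ENNReal.div_le_div_right hmgf _)
    _ = ENNReal.ofReal (√2 ^ Fintype.card κ * exp (-(a / (4 * L)))) := by
        rw [← ENNReal.ofReal_div_of_pos (exp_pos _), div_eq_mul_inv, ← exp_neg]
        simp only [t]
        ring_nf

lemma stdGaussianPi_dotProduct_mulVec_tail_le_exp (A : Matrix κ ι ℝ) {L : ℝ} (hL : 0 < L)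
    (hA : ∀ g, (Aᵀ *ᵥ g) ⬝ᵥ (Aᵀ *ᵥ g) ≤ L * (g ⬝ᵥ g)) {M : ℝ} (hM : 1 ≤ M) :
    stdGaussianPi ι {z | 9 * M * Fintype.card κ * L ≤ (A *ᵥ z) ⬝ᵥ (A *ᵥ z)} ≤
      ENNReal.ofReal (exp (-(M * Fintype.card κ))) := by
  refine (stdGaussianPi_dotProduct_mulVec_tail_le A hL hA _).trans (ENNReal.ofReal_le_ofReal ?_)
  have hsqrt2 : √2 ≤ exp (5 * M / 4) := by
    calc √2 ≤ 2 := by rw [sqrt_le_left (by norm_num)]; norm_num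
      _ ≤ exp 1 := by linarith [add_one_le_exp 1]
      _ ≤ exp (5 * M / 4) := exp_le_exp.2 (by linarith)
  calc √2 ^ Fintype.card κ * exp (-(9 * M * Fintype.card κ * L / (4 * L)))
      ≤ exp (5 * M / 4) ^ Fintype.card κ * exp (-(9 * M * Fintype.card κ * L / (4 * L))) := by
        gcongr
    _ = exp (-(M * Fintype.card κ)) := by
        rw [← exp_nat_mul, ← exp_add]
        congr 1
        field_simp
        ring

end StdGaussianPi

lemma nrm2_eq_sqrt_dotProduct {p : ℕ} (v : Fin p → ℝ) : nrm2 v = √(v ⬝ᵥ v) := by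
  simp only [nrm2, dotProduct, sq]

lemma dotProduct_self_nonneg {p : Type*} [Fintype p] (v : p → ℝ) : 0 ≤ v ⬝ᵥ v :=
  Finset.sum_nonneg fun i _ => mul_self_nonneg (v i)

lemma bddAbove_lamMax_set {s : ℕ} (A : Matrix (Fin s) (Fin s) ℝ) :
    BddAbove {r : ℝ | ∃ v : Fin s → ℝ, nrm2 v = 1 ∧ r = ∑ i, v i * A.mulVec v i} := by
  refine ⟨∑ i, ∑ j, |A i j|, ?_⟩
  rintro _ ⟨v, hv, rfl⟩
  have hvv : ∑ j, v j ^ 2 = 1 := by rw [← sqrt_eq_one, ← hv, nrm2]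
  have hv1 : ∀ i, |v i| ≤ 1 := fun i => (sq_le_one_iff_abs_le_one _).1 <|
    hvv ▸ Finset.single_le_sum (fun j _ => sq_nonneg (v j)) (Finset.mem_univ i)
  calc ∑ i, v i * (A *ᵥ v) i = ∑ i, ∑ j, v i * A i j * v j := by
        simp only [mulVec, dotProduct, Finset.mul_sum, mul_assoc]
    _ ≤ ∑ i, ∑ j, |A i j| := by
        gcongr with i _ j _
        calc v i * A i j * v j ≤ |v i| * |A i j| * |v j| := by
              rw [← abs_mul, ← abs_mul]; exact le_abs_self _
          _ ≤ 1 * |A i j| * 1 := by gcongr <;> exact hv1 _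
          _ = |A i j| := by ring

lemma dotProduct_mulVec_le_lamMax {s : ℕ} (A : Matrix (Fin s) (Fin s) ℝ) (u : Fin s → ℝ) :
    u ⬝ᵥ (A *ᵥ u) ≤ lamMax A * (u ⬝ᵥ u) := by
  rcases eq_or_ne u 0 with rfl | hu
  · simp
  set r := √(u ⬝ᵥ u)
  have hr : 0 < r := sqrt_pos.2 <| (dotProduct_self_nonneg u).lt_of_ne' (by simpa using hu)
  have hrr : r * r = u ⬝ᵥ u := mul_self_sqrt (dotProduct_self_nonneg u)
  have hunit : nrm2 (r⁻¹ • u) = 1 := by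
    rw [nrm2_eq_sqrt_dotProduct, smul_dotProduct, dotProduct_smul, smul_smul, smul_eq_mul,
      ← hrr]
    field_simp
    exact sqrt_one
  have hle : (r⁻¹ • u) ⬝ᵥ (A *ᵥ (r⁻¹ • u)) ≤ lamMax A :=
    le_csSup (bddAbove_lamMax_set A) ⟨_, hunit, rfl⟩
  rw [mulVec_smul, smul_dotProduct, dotProduct_smul, smul_smul, smul_eq_mul,
    ← mul_inv, inv_mul_le_iff₀ (by positivity), hrr] at hle
  linarith

lemma dotProduct_mulVec_self_le_lamMax {m s : ℕ} (X : Matrix (Fin m) (Fin s) ℝ) {c : ℝ}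
    (hc : 0 < c) (g : Fin s → ℝ) :
    (X *ᵥ g) ⬝ᵥ (X *ᵥ g) ≤ c * lamMax (c⁻¹ • (Xᵀ * X)) * (g ⬝ᵥ g) := by
  have hgram : (X *ᵥ g) ⬝ᵥ (X *ᵥ g) = c * (g ⬝ᵥ ((c⁻¹ • (Xᵀ * X)) *ᵥ g)) := by
    rw [smul_mulVec, dotProduct_smul, smul_eq_mul, mul_inv_cancel_left₀ hc.ne',
      ← mulVec_mulVec, dotProduct_transpose_mulVec]
  rw [hgram, mul_assoc]
  exact mul_le_mul_of_nonneg_left (dotProduct_mulVec_le_lamMax _ g) hc.le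

lemma one_le_lamMax {n s : ℕ} (X : Matrix (Fin n) (Fin s) ℝ) (hn : (n : ℝ) ≠ 0)
    (hcol : ∀ j : Fin s, nrm2 (fun i => X i j) = √n) (j : Fin s) :
    1 ≤ lamMax ((n : ℝ)⁻¹ • (Xᵀ * X)) := by
  have hunit : nrm2 (Pi.single j 1 : Fin s → ℝ) = 1 := by
    rw [nrm2_eq_sqrt_dotProduct, single_one_dotProduct, Pi.single_eq_same, sqrt_one]
  have hnorm : ∑ i, X i j * X i j = n := by
    have := hcol j
    rw [nrm2_eq_sqrt_dotProduct, sqrt_inj (dotProduct_self_nonneg _) n.cast_nonneg] at this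
    exact this
  refine le_csSup (bddAbove_lamMax_set _) ⟨_, hunit, ?_⟩
  change 1 = Pi.single j 1 ⬝ᵥ (_ *ᵥ Pi.single j 1)
  rw [single_one_dotProduct, mulVec_single_one, col_apply, Matrix.smul_apply, mul_apply,
    smul_eq_mul]
  simp only [transpose_apply, hnorm, inv_mul_cancel₀ hn]

lemma noiseMeasure_eq_map_smul (n : ℕ) (σ : ℝ) :
    noiseMeasure n σ = (stdGaussianPi (Fin n)).map (σ • ·) := by
  rw [stdGaussianPi, show (σ • · : (Fin n → ℝ) → Fin n → ℝ) = fun x i => σ * x i from rfl,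
    Measure.pi_map_pi fun _ => by fun_prop]
  simp_rw [gaussianReal_map_const_mul, mul_zero, mul_one]
  rw [noiseMeasure, Real.toNNReal_of_nonneg (sq_nonneg σ)]

lemma inv_mul_nrm2_mulVec_smul_le {n s : ℕ} (X : Matrix (Fin n) (Fin s) ℝ) {σ : ℝ} (hσ : 0 ≤ σ)
    (hn : (0 : ℝ) < n) {a : ℝ} {z : Fin n → ℝ} (hz : (Xᵀ *ᵥ z) ⬝ᵥ (Xᵀ *ᵥ z) ≤ 9 * a * n) :
    (n : ℝ)⁻¹ * nrm2 (Xᵀ *ᵥ (σ • z)) ≤ 3 * σ * √(a / n) := by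
  have hscale : nrm2 (Xᵀ *ᵥ (σ • z)) = σ * √((Xᵀ *ᵥ z) ⬝ᵥ (Xᵀ *ᵥ z)) := by
    rw [nrm2_eq_sqrt_dotProduct, mulVec_smul, smul_dotProduct, dotProduct_smul, smul_smul,
      smul_eq_mul, sqrt_mul (mul_self_nonneg σ), sqrt_mul_self hσ]
  have hthreshold : √(9 * a * n) = 3 * n * √(a / n) := by
    rw [show 9 * a * n = (3 * n) ^ 2 * (a / n) by field_simp; ring,
      sqrt_mul (sq_nonneg _), sqrt_sq (by positivity)]
  calc (n : ℝ)⁻¹ * nrm2 (Xᵀ *ᵥ (σ • z)) ≤ (n : ℝ)⁻¹ * (σ * √(9 * a * n)) := by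
        rw [hscale]; gcongr
    _ = 3 * σ * √(a / n) := by
        rw [hthreshold]; field_simp

/-- For `w` with i.i.d. `N(0, σ²)` entries and `X ∈ ℝ^{n×s}` with columns of norm `√n`,
`s < n`, for any `M ≥ 1`, with probability at least `1 − e^{−Ms}`,
`(1/n)‖Xᵀw‖ ≤ 3σ√(Ms·λ_max(XᵀX/n)/n)`. -/
theorem stmt14 (n s : ℕ) (σ : ℝ) (hσ : 0 ≤ σ) (X : Matrix (Fin n) (Fin s) ℝ)
    (hcol : ∀ j : Fin s, nrm2 (fun i => X i j) = Real.sqrt n) (hs : s < n)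
    (M : ℝ) (hM : 1 ≤ M) :
    noiseMeasure n σ
        {w | (n : ℝ)⁻¹ * nrm2 (Xᵀ.mulVec w) ≤
            3 * σ * Real.sqrt (M * (s : ℝ) * lamMax ((n : ℝ)⁻¹ • (Xᵀ * X)) / (n : ℝ))} ≥
      ENNReal.ofReal (1 - Real.exp (-(M * (s : ℝ)))) := by
  rcases Nat.eq_zero_or_pos s with rfl | hs0
  · simp
  have hn : (0 : ℝ) < n := Nat.cast_pos.2 (hs0.trans hs)
  set lam := lamMax ((n : ℝ)⁻¹ • (Xᵀ * X))
  have hL : 0 < n * lam := mul_pos hn (one_pos.trans_le (one_le_lamMax X hn.ne' hcol ⟨0, hs0⟩))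
  have htail := stdGaussianPi_dotProduct_mulVec_tail_le_exp Xᵀ hL
    (by simpa using dotProduct_mulVec_self_le_lamMax X hn) hM
  rw [Fintype.card_fin] at htail
  have hevent : {z | 9 * M * s * (n * lam) ≤ (Xᵀ *ᵥ z) ⬝ᵥ (Xᵀ *ᵥ z)}ᶜ ⊆ (σ • ·) ⁻¹'
      {w | (n : ℝ)⁻¹ * nrm2 (Xᵀ *ᵥ w) ≤ 3 * σ * √(M * s * lam / n)} := fun z hz =>
    inv_mul_nrm2_mulVec_smul_le X hσ hn (by
      simp only [Set.mem_compl_iff, Set.mem_ofPred_eq, not_le] at hz; linarith)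
  rw [ge_iff_le, noiseMeasure_eq_map_smul]
  calc ENNReal.ofReal (1 - exp (-(M * s)))
      = 1 - ENNReal.ofReal (exp (-(M * s))) := by
        rw [ENNReal.ofReal_sub _ (exp_pos _).le, ENNReal.ofReal_one]
    _ ≤ 1 - stdGaussianPi (Fin n) {z | 9 * M * s * (n * lam) ≤ (Xᵀ *ᵥ z) ⬝ᵥ (Xᵀ *ᵥ z)} :=
        tsub_le_tsub_left htail 1
    _ = stdGaussianPi (Fin n) {z | 9 * M * s * (n * lam) ≤ (Xᵀ *ᵥ z) ⬝ᵥ (Xᵀ *ᵥ z)}ᶜ :=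
        (prob_compl_eq_one_sub (measurableSet_le (by fun_prop) (by fun_prop))).symm
    _ ≤ _ := (measure_mono hevent).trans (Measure.le_map_apply (by fun_prop) _)
end
end
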